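/- (Asymmetry nearly attained at symmetric centers) Let E ⊂ {x_n > 0} be a Borel set with finite measure, symmetric with respect to k ∈ {1,…,n-1} mutually orthogonal hyperplanes H_j = {⟨x, ν_j⟩ = 0} with ⟨ν_j, e_n⟩ = 0. Then min over y ∈ {x_n=0} ∩ ⋂_j H_j of |E Δ B^λ(|E|, y)| is at most 3 times the unrestricted minimum min over x ∈ {x_n=0} of |E Δ B^λ(|E|, x)|. -/

import Mathlib

open MeasureTheory Metric Set Filter Topology
open scoped ENNReal NNReal RealInnerProductSpace symmDiff

noncomputable section

/-- Euclidean `n`-space. -/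
abbrev V (n : ℕ) : Type := EuclideanSpace ℝ (Fin n)

/-- The index of the last coordinate. -/
def lastIdx (n : ℕ) [NeZero n] : Fin n :=
  ⟨n - 1, Nat.sub_lt (Nat.pos_of_ne_zero (NeZero.ne n)) Nat.one_pos⟩

/-- The last standard basis vector `e_n`. -/
def eN (n : ℕ) [NeZero n] : V n := EuclideanSpace.single (lastIdx n) (1 : ℝ)

/-- The open upper half-space `{x_n > 0}`. -/
def upperHalf (n : ℕ) [NeZero n] : Set (V n) := {x | 0 < x (lastIdx n)}

/-- The boundary hyperplane `{x_n = 0}`. -/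
def hyp (n : ℕ) [NeZero n] : Set (V n) := {x | x (lastIdx n) = 0}

/-- Divergence of a vector field. -/
def vdiv {n : ℕ} (T : V n → V n) (x : V n) : ℝ :=
  LinearMap.trace ℝ (V n) (fderiv ℝ T x : V n →ₗ[ℝ] V n)

/-- Relative perimeter of `E` in `A`, via the variational (De Giorgi) definition. -/
def relPer {n : ℕ} (E A : Set (V n)) : ℝ≥0∞ :=
  ⨆ (T : V n → V n) (_ : ContDiff ℝ 1 T ∧ HasCompactSupport T ∧ tsupport T ⊆ A ∧
      ∀ x, ‖T x‖ ≤ 1), ENNReal.ofReal (∫ x in E, vdiv T x)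

/-- Total perimeter of a set in `ℝⁿ`. -/
def per {n : ℕ} (E : Set (V n)) : ℝ≥0∞ := relPer E Set.univ

/-- The reduced (essential) boundary of a set: points of Lebesgue density neither `0` nor `1`
(this coincides with the reduced boundary up to `H^{n-1}`-negligible sets). -/
def redBdry {n : ℕ} (E : Set (V n)) : Set (V n) :=
  {x | ¬ Tendsto (fun r : ℝ => volume (E ∩ ball x r) / volume (ball x r))
        (nhdsWithin (0 : ℝ) (Set.Ioi 0)) (nhds (0 : ℝ≥0∞)) ∧
      ¬ Tendsto (fun r : ℝ => volume (E ∩ ball x r) / volume (ball x r))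
        (nhdsWithin (0 : ℝ) (Set.Ioi 0)) (nhds (1 : ℝ≥0∞))}

/-- `ν` is the (measure-theoretic) outer unit normal of `E` at `x`: the blow-ups of `E`
at `x` converge to the half-space `{⟨y - x, ν⟩ < 0}`. -/
def IsOuterNormal {n : ℕ} (E : Set (V n)) (x ν : V n) : Prop :=
  ‖ν‖ = 1 ∧ Tendsto (fun r : ℝ =>
      volume ((E ∆ {y : V n | ⟪y - x, ν⟫ < 0}) ∩ ball x r) / volume (ball x r))
    (nhdsWithin (0 : ℝ) (Set.Ioi 0)) (nhds (0 : ℝ≥0∞))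

/-- The wetted region measure `H^{n-1}(∂*E ∩ {x_n = 0})`. -/
def wetted (n : ℕ) [NeZero n] (E : Set (V n)) : ℝ≥0∞ :=
  μH[(n : ℝ) - 1] (redBdry E ∩ hyp n)

/-- The capillarity perimeter `P_λ(E) = P(E, {x_n>0}) - λ H^{n-1}(∂*E ∩ {x_n=0})`. -/
def Pl (n : ℕ) [NeZero n] (lam : ℝ) (E : Set (V n)) : ℝ :=
  (relPer E (upperHalf n)).toReal - lam * (wetted n E).toReal

/-- The truncated unit ball `B^λ = {x ∈ B_1(0) : x_n > λ}`. -/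
def Bl (n : ℕ) [NeZero n] (lam : ℝ) : Set (V n) :=
  {x | x ∈ ball (0 : V n) 1 ∧ lam < x (lastIdx n)}

/-- The volume `|B^λ|`. -/
def BlVol (n : ℕ) [NeZero n] (lam : ℝ) : ℝ := (volume (Bl n lam)).toReal

/-- The optimal bubble `B^λ(v) = (v/|B^λ|)^{1/n} (B^λ - λ e_n)` of volume `v`. -/
def bubble (n : ℕ) [NeZero n] (lam v : ℝ) : Set (V n) :=
  (fun x => (v / BlVol n lam) ^ ((1 : ℝ) / n) • (x - lam • eN n)) '' Bl n lam

/-- The translated bubble `B^λ(v, y)`. -/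
def bubbleAt (n : ℕ) [NeZero n] (lam v : ℝ) (y : V n) : Set (V n) :=
  (fun x => x + y) '' bubble n lam v

/-- The value `P_λ(B^λ(v)) = n |B^λ|^{1/n} v^{(n-1)/n}`. -/
def PlBub (n : ℕ) [NeZero n] (lam v : ℝ) : ℝ :=
  n * BlVol n lam ^ ((1 : ℝ) / n) * v ^ (((n : ℝ) - 1) / n)

/-- The isoperimetric deficit `D_λ`. -/
def deficit (n : ℕ) [NeZero n] (lam : ℝ) (E : Set (V n)) : ℝ :=
  (Pl n lam E - PlBub n lam (volume E).toReal) / PlBub n lam (volume E).toReal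

/-- The Fraenkel asymmetry `α_λ`. -/
def asym (n : ℕ) [NeZero n] (lam : ℝ) (E : Set (V n)) : ℝ :=
  ⨅ y : hyp n,
    (volume (E ∆ bubbleAt n lam (volume E).toReal (y : V n))).toReal / (volume E).toReal

end

/-! Let `x` be any admissible center and `x̄` its reflection in the symmetry hyperplanes. Since `E`
is symmetric, the bubble at `x̄` is exactly as close to `E` as the bubble at `x`. The midpoint `y`
of `x` and `x̄` is a symmetric center, and by convexity translating a bubble by half a vector
moves it, in measure, no more than translating it by the whole vector, so
`|B(x) Δ B(y)| ≤ |B(x) Δ B(x̄)| ≤ 2 |E Δ B(x)|`; the triangle inequality gives the factor `3`. -/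

open scoped Pointwise

section ConvexTranslate

variable {F : Type*} [NormedAddCommGroup F] [NormedSpace ℝ F] [MeasurableSpace F] [BorelSpace F]
  [FiniteDimensional ℝ F] (μ : Measure F) [μ.IsAddHaarMeasure]

/-- Translating back by `a` maps `s ∩ (2a + s)` into `s ∩ (a + s)`: `z - a` is the midpoint of
`z` and `z - 2a`. -/
theorem Convex.measure_inter_two_smul_vadd_le {s : Set F} (hs : Convex ℝ s) (a : F) :
    μ (s ∩ ((2 : ℝ) • a +ᵥ s)) ≤ μ (s ∩ (a +ᵥ s)) := by
  rw [← measure_vadd μ (-a)]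
  refine measure_mono ?_
  rintro _ ⟨z, ⟨hz, hz₂⟩, rfl⟩
  rw [mem_vadd_set_iff_neg_vadd_mem, vadd_eq_add] at hz₂
  refine ⟨?_, ?_⟩
  · convert hs hz hz₂ (by norm_num : (0 : ℝ) ≤ 1 / 2) (by norm_num : (0 : ℝ) ≤ 1 / 2) (by norm_num)
      using 1
    simp only [vadd_eq_add]
    module
  · rw [mem_vadd_set_iff_neg_vadd_mem]
    simp only [vadd_eq_add]
    convert hz₂ using 1
    module

theorem measure_symmDiff_vadd_self {s : Set F} (hs : NullMeasurableSet s μ) (hfin : μ s ≠ ⊤)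
    (a : F) : μ (s ∆ (a +ᵥ s)) = 2 * (μ s - μ (s ∩ (a +ᵥ s))) := by
  have hs' : NullMeasurableSet (a +ᵥ s) μ := hs.vadd a
  have hinter : μ (s ∩ (a +ᵥ s)) ≠ ⊤ := measure_ne_top_of_subset inter_subset_left hfin
  have hdiff : μ (s \ (a +ᵥ s)) = μ s - μ (s ∩ (a +ᵥ s)) :=
    ENNReal.eq_sub_of_add_eq hinter ((add_comm _ _).trans (measure_inter_add_sdiff₀ s hs'))
  have hdiff' : μ ((a +ᵥ s) \ s) = μ s - μ (s ∩ (a +ᵥ s)) := by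
    rw [← measure_vadd μ a s, inter_comm]
    exact ENNReal.eq_sub_of_add_eq (by rwa [inter_comm])
      ((add_comm _ _).trans (measure_inter_add_sdiff₀ _ hs))
  rw [measure_symmDiff_eq hs hs', hdiff, hdiff', two_mul]

theorem Convex.measure_symmDiff_vadd_le_two_smul {s : Set F} (hs : Convex ℝ s) (hfin : μ s ≠ ⊤)
    (a : F) : μ (s ∆ (a +ᵥ s)) ≤ μ (s ∆ ((2 : ℝ) • a +ᵥ s)) := by
  rw [measure_symmDiff_vadd_self μ (hs.nullMeasurableSet μ) hfin,
    measure_symmDiff_vadd_self μ (hs.nullMeasurableSet μ) hfin]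
  exact mul_le_mul_right (tsub_le_tsub_left (hs.measure_inter_two_smul_vadd_le μ a) _) 2

theorem Convex.measure_symmDiff_vadd_le {B : Set F} (hB : Convex ℝ B) (hfin : μ B ≠ ⊤)
    (E : Set F) (a : F) :
    μ (E ∆ (a +ᵥ B)) ≤ 2 * μ (E ∆ B) + μ (E ∆ ((2 : ℝ) • a +ᵥ B)) :=
  calc μ (E ∆ (a +ᵥ B)) ≤ μ (E ∆ B) + μ (B ∆ (a +ᵥ B)) := measure_symmDiff_le _ _ _
    _ ≤ μ (E ∆ B) + μ (B ∆ ((2 : ℝ) • a +ᵥ B)) := by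
      gcongr ?_ + ?_; exacts [le_rfl, hB.measure_symmDiff_vadd_le_two_smul μ hfin a]
    _ ≤ μ (E ∆ B) + (μ (B ∆ E) + μ (E ∆ ((2 : ℝ) • a +ᵥ B))) := by
      gcongr ?_ + ?_; exacts [le_rfl, measure_symmDiff_le _ _ _]
    _ = 2 * μ (E ∆ B) + μ (E ∆ ((2 : ℝ) • a +ᵥ B)) := by
      rw [symmDiff_comm B E, two_mul, add_assoc]

end ConvexTranslate

theorem LinearIsometryEquiv.volume_image {F G : Type*} [NormedAddCommGroup F]
    [InnerProductSpace ℝ F] [FiniteDimensional ℝ F] [MeasurableSpace F] [BorelSpace F]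
    [NormedAddCommGroup G] [InnerProductSpace ℝ G] [FiniteDimensional ℝ G] [MeasurableSpace G]
    [BorelSpace G] (f : F ≃ₗᵢ[ℝ] G) (s : Set F) : volume (f '' s) = volume s := by
  rw [f.image_eq_preimage_symm]
  exact f.symm.measurePreserving.measure_preimage_equiv (f := f.symm.toMeasurableEquiv) s

section Reflection

variable {F : Type*} [NormedAddCommGroup F] [InnerProductSpace ℝ F] {ι : Type*} {ν : ι → F}

theorem starProjection_iInf_orthogonal_apply [FiniteDimensional ℝ F] [Fintype ι]
    (hν : Orthonormal ℝ ν) (x : F) :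
    (⨅ j, (ℝ ∙ ν j)ᗮ).starProjection x = x - ∑ j, ⟪ν j, x⟫ • ν j := by
  refine Submodule.eq_starProjection_of_mem_of_inner_eq_zero ?_ fun w hw => ?_
  · simp only [Submodule.mem_iInf, Submodule.mem_orthogonal_singleton_iff_inner_right]
    intro i
    rw [inner_sub_right, hν.inner_right_fintype, sub_self]
  · simp only [Submodule.mem_iInf, Submodule.mem_orthogonal_singleton_iff_inner_right] at hw
    simp [sum_inner, real_inner_smul_left, hw]

theorem reflection_iInf_orthogonal_apply [FiniteDimensional ℝ F] [Fintype ι]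
    (hν : Orthonormal ℝ ν) (x : F) :
    (⨅ j, (ℝ ∙ ν j)ᗮ).reflection x = x - ∑ j, (2 * ⟪x, ν j⟫) • ν j := by
  simp only [Submodule.reflection_apply, starProjection_iInf_orthogonal_apply hν, mul_smul,
    ← Finset.smul_sum, real_inner_comm x]
  module

/-- The map is the composite of the reflections in the hyperplanes `(ν j)ᗮ`, `j ∈ s`. -/
theorem image_sub_sum_reflect_eq (horth : Pairwise fun i j => ⟪ν i, ν j⟫ = 0) {E : Set F}
    (hE : ∀ j, (fun x => x - (2 * ⟪x, ν j⟫) • ν j) '' E = E) (s : Finset ι) :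
    (fun x => x - ∑ j ∈ s, (2 * ⟪x, ν j⟫) • ν j) '' E = E := by
  classical
  induction s using Finset.induction_on with
  | empty => simp
  | insert i s hi ih =>
    have hinner (x : F) : ⟪x - ∑ j ∈ s, (2 * ⟪x, ν j⟫) • ν j, ν i⟫ = ⟪x, ν i⟫ := by
      rw [inner_sub_left, sum_inner, Finset.sum_eq_zero fun j hj => by
        rw [real_inner_smul_left, horth (ne_of_mem_of_not_mem hj hi), mul_zero], sub_zero]
    have hcomp : (fun x => x - ∑ j ∈ insert i s, (2 * ⟪x, ν j⟫) • ν j)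
        = (fun x => x - (2 * ⟪x, ν i⟫) • ν i) ∘ fun x => x - ∑ j ∈ s, (2 * ⟪x, ν j⟫) • ν j := by
      funext x
      simp only [Function.comp_apply, hinner, Finset.sum_insert hi]
      abel
    rw [hcomp, image_comp, ih, hE i]

theorem reflection_iInf_orthogonal_image_eq [FiniteDimensional ℝ F] [Fintype ι]
    (hν : Orthonormal ℝ ν) {E : Set F} (hE : ∀ j, (fun x => x - (2 * ⟪x, ν j⟫) • ν j) '' E = E) :
    (⨅ j, (ℝ ∙ ν j)ᗮ).reflection '' E = E := by
  have h := image_sub_sum_reflect_eq hν.2 hE Finset.univ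
  rwa [← funext (reflection_iInf_orthogonal_apply hν)] at h

end Reflection

section Bubble

variable {n : ℕ} [NeZero n]

theorem inner_eN (x : V n) : ⟪x, eN n⟫ = x (lastIdx n) := by
  simp [eN, EuclideanSpace.inner_single_right]

theorem convex_Bl (lam : ℝ) : Convex ℝ (Bl n lam) :=
  (convex_ball 0 1).inter (convex_halfSpace_gt ⟨fun _ _ => rfl, fun _ _ => rfl⟩ lam)

theorem bubble_eq_smul_vadd (lam v : ℝ) :
    bubble n lam v = (v / BlVol n lam) ^ ((1 : ℝ) / n) • (-(lam • eN n) +ᵥ Bl n lam) := by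
  rw [bubble, ← image_vadd, ← image_smul, image_image]
  simp only [vadd_eq_add, neg_add_eq_sub]

theorem convex_bubble (lam v : ℝ) : Convex ℝ (bubble n lam v) := by
  rw [bubble_eq_smul_vadd]
  exact ((convex_Bl lam).vadd _).smul _

theorem volume_bubble_ne_top (lam v : ℝ) : volume (bubble n lam v) ≠ ⊤ := by
  rw [bubble_eq_smul_vadd]
  exact ((isBounded_ball.subset fun _ hx => hx.1).vadd _).smul₀ _ |>.measure_lt_top.ne

theorem bubbleAt_eq_vadd (lam v : ℝ) (y : V n) : bubbleAt n lam v y = y +ᵥ bubble n lam v := by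
  rw [bubbleAt, ← image_vadd]
  simp only [vadd_eq_add, add_comm]

theorem bubbleAt_eq_sub_vadd (lam v : ℝ) (x y : V n) :
    bubbleAt n lam v y = (y - x) +ᵥ bubbleAt n lam v x := by
  rw [bubbleAt_eq_vadd, bubbleAt_eq_vadd, vadd_vadd, sub_add_cancel]

section Isometry

variable (R : V n ≃ₗᵢ[ℝ] V n) (hR : R (eN n) = eN n)
include hR

theorem LinearIsometryEquiv.preimage_Bl (lam : ℝ) : R ⁻¹' Bl n lam = Bl n lam := by
  ext x
  have hlast : ⟪R x, eN n⟫ = ⟪x, eN n⟫ := by conv_rhs => rw [← R.inner_map_map, hR]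
  simp only [Bl, mem_preimage, mem_ofPred_eq, mem_ball_zero_iff, R.norm_map, ← inner_eN, hlast]

theorem LinearIsometryEquiv.image_Bl (lam : ℝ) : R '' Bl n lam = Bl n lam := by
  rw [R.image_eq_preimage_symm, R.symm.preimage_Bl (by rw [R.symm_apply_eq, hR])]

theorem LinearIsometryEquiv.image_bubble (lam v : ℝ) : R '' bubble n lam v = bubble n lam v := by
  rw [bubble, image_image]
  simp only [map_smul, map_sub, hR]
  rw [← image_image (fun x => _ • (x - lam • eN n)) R, R.image_Bl hR]

theorem LinearIsometryEquiv.image_bubbleAt (lam v : ℝ) (y : V n) :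
    R '' bubbleAt n lam v y = bubbleAt n lam v (R y) := by
  rw [bubbleAt, image_image]
  simp only [map_add]
  rw [← image_image (· + R y) R, R.image_bubble hR, bubbleAt]

end Isometry

end Bubble

section SymmetricCenter

variable {n : ℕ} [NeZero n] (K : Submodule ℝ (V n)) [K.HasOrthogonalProjection]

theorem starProjection_mem_hyp (he : eN n ∈ K) {x : V n} (hx : x ∈ hyp n) :
    K.starProjection x ∈ hyp n := by
  change K.starProjection x (lastIdx n) = 0
  rw [← inner_eN, K.inner_starProjection_left_eq_right,
    K.starProjection_eq_self_iff.mpr he, inner_eN]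
  exact hx

theorem measure_symmDiff_bubbleAt_starProjection_le (he : eN n ∈ K) {E : Set (V n)}
    (hE : K.reflection '' E = E) (lam v : ℝ) (x : V n) :
    volume (E ∆ bubbleAt n lam v (K.starProjection x))
      ≤ 3 * volume (E ∆ bubbleAt n lam v x) := by
  have hRe : K.reflection (eN n) = eN n := K.reflection_mem_subspace_eq_self he
  have hreflect : volume (E ∆ bubbleAt n lam v (K.reflection x))
      = volume (E ∆ bubbleAt n lam v x) := by
    have himage : K.reflection '' (E ∆ bubbleAt n lam v x)
        = E ∆ bubbleAt n lam v (K.reflection x) := by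
      rw [image_symmDiff K.reflection.injective, hE, K.reflection.image_bubbleAt hRe]
    rw [← himage, LinearIsometryEquiv.volume_image]
  have hdisp : K.reflection x - x = (2 : ℝ) • (K.starProjection x - x) := by
    rw [K.reflection_apply, two_smul, two_smul]
    abel
  have hB : Convex ℝ (bubbleAt n lam v x) := by
    rw [bubbleAt_eq_vadd]; exact (convex_bubble lam v).vadd x
  have hBfin : volume (bubbleAt n lam v x) ≠ ⊤ := by
    rw [bubbleAt_eq_vadd, measure_vadd]; exact volume_bubble_ne_top lam v
  calc volume (E ∆ bubbleAt n lam v (K.starProjection x))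
      ≤ 2 * volume (E ∆ bubbleAt n lam v x) + volume (E ∆ bubbleAt n lam v (K.reflection x)) := by
        rw [bubbleAt_eq_sub_vadd lam v x, bubbleAt_eq_sub_vadd lam v x (K.reflection x), hdisp]
        exact hB.measure_symmDiff_vadd_le volume hBfin E _
    _ = 3 * volume (E ∆ bubbleAt n lam v x) := by
        rw [hreflect]; ring

end SymmetricCenter

theorem asymmetry_symmetric_centers_general (n : ℕ) [NeZero n]
    (lam : ℝ)
    (k : ℕ)
    (νs : Fin k → V n) (hunit : ∀ j, ‖νs j‖ = 1)
    (horth : ∀ i j, i ≠ j → ⟪νs i, νs j⟫ = 0)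
    (hperp : ∀ j, ⟪νs j, eN n⟫ = 0)
    (E : Set (V n))
    (hsymm : ∀ j, (fun x : V n => x - (2 * ⟪x, νs j⟫) • νs j) '' E = E) :
    (⨅ y : {y : V n // y ∈ hyp n ∧ ∀ j, ⟪y, νs j⟫ = 0},
        volume (E ∆ bubbleAt n lam (volume E).toReal (y : V n)))
      ≤ 3 * ⨅ y : hyp n, volume (E ∆ bubbleAt n lam (volume E).toReal (y : V n)) := by
  set K : Submodule ℝ (V n) := ⨅ j, (ℝ ∙ νs j)ᗮ
  have hK (y : V n) : y ∈ K ↔ ∀ j, ⟪νs j, y⟫ = 0 := by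
    simp only [K, Submodule.mem_iInf, Submodule.mem_orthogonal_singleton_iff_inner_right]
  have he : eN n ∈ K := (hK _).mpr hperp
  have hEK : K.reflection '' E = E :=
    reflection_iInf_orthogonal_image_eq ⟨hunit, fun i j hij => horth i j hij⟩ hsymm
  rw [ENNReal.mul_iInf_of_ne three_ne_zero ENNReal.ofNat_ne_top]
  refine le_iInf fun ⟨x, hx⟩ => iInf_le_of_le ⟨K.starProjection x, ?_, ?_⟩ ?_
  · exact starProjection_mem_hyp K he hx
  · exact fun j => real_inner_comm (νs j) _ ▸ (hK _).mp (K.starProjection_apply_mem x) j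
  · exact measure_symmDiff_bubbleAt_starProjection_le K he hEK _ _ x

/-- (Asymmetry nearly attained at symmetric centers) If `E` is symmetric with
respect to `k ∈ {1,…,n-1}` mutually orthogonal hyperplanes `{⟨x, ν_j⟩ = 0}` with `ν_j ⊥ e_n`,
then the minimum of `|E Δ B^λ(|E|, y)|` over centers `y` in `{x_n=0} ∩ ⋂_j {⟨·,ν_j⟩=0}` is at
most three times the unrestricted minimum over `x ∈ {x_n=0}`. -/
theorem asymmetry_symmetric_centers (n : ℕ) [NeZero n] (hn : 2 ≤ n)
    (lam : ℝ) (hlam : lam ∈ Set.Ioo (-1 : ℝ) 1)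
    (k : ℕ) (hk₁ : 1 ≤ k) (hk₂ : k ≤ n - 1)
    (νs : Fin k → V n) (hunit : ∀ j, ‖νs j‖ = 1)
    (horth : ∀ i j, i ≠ j → ⟪νs i, νs j⟫ = 0)
    (hperp : ∀ j, ⟪νs j, eN n⟫ = 0)
    (E : Set (V n)) (hE : MeasurableSet E) (hEsub : E ⊆ upperHalf n)
    (hvol : volume E ≠ ⊤) (hvol0 : 0 < volume E)
    (hsymm : ∀ j, (fun x : V n => x - (2 * ⟪x, νs j⟫) • νs j) '' E = E) :
    (⨅ y : {y : V n // y ∈ hyp n ∧ ∀ j, ⟪y, νs j⟫ = 0},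
        volume (E ∆ bubbleAt n lam (volume E).toReal (y : V n)))
      ≤ 3 * ⨅ y : hyp n, volume (E ∆ bubbleAt n lam (volume E).toReal (y : V n)) :=
  asymmetry_symmetric_centers_general n lam k νs hunit horth hperp E hsymm
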